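/- arXiv:1510.07118 — 3 statements merged into one kernel-verified Lean document; each statement's English description precedes it below -/
import Mathlib

section
/- Let ℓ, ℓ' ≥ 1 be integers, let r ≥ 4 be an integer divisible by 4, and let 0 < η ≤ 1. Let p : 𝔽₂^ℓ × 𝔽₂^ℓ → ℝ≥0 satisfy p(s,t) ≤ η for all s, t and Σ_{s,t} p(s,t) ≤ 1. Let F and G be drawn independently and uniformly at random from (possibly different) r-wise independent families of functions from 𝔽₂^ℓ to 𝔽₂^{ℓ'}, and let u₀, u₁ ∈ 𝔽₂^{ℓ'} be nonzero. Define the random variable R = Σ_{s,t ∈ 𝔽₂^ℓ} (-1)^{⟨u₀,F(s)⟩ + ⟨u₁,G(t)⟩} · p(s,t). Then for every λ > 0, P(|R| ≥ λ) ≤ 8·e^{1/(3r)}·√(πr)·(8·η·r²/(e²·λ²))^{r/4}. -/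
/-!
Markov's inequality for the even moment `R ^ (r / 2)`. Expanding the moment over index sequences
`S, T` of length `r / 2`, `r`-wise independence makes the average of `∏ᵢ (-1)^⟨u₀, F (S i)⟩` equal
to `1` if every value occurs an even number of times in `S` and `0` otherwise (likewise for `G`,
`T`). Such an `S` is invariant under some fixed-point-free involution `σ` of the positions. For
fixed `σ` and `τ`, the sum of `∏ᵢ p (S i) (T i)` over `σ`-invariant `S` and `τ`-invariant `T`
factors over the pairs, and Cauchy–Schwarz bounds it by `(Σ p²) ^ (r / 4) ≤ η ^ (r / 4)`. The
involutions are the permutations of cycle type `2^(r/4)`, of which there are at most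
`(r / 4) ^ (r / 4)`; hence `E R ^ (r / 2) ≤ ((r / 4)² η) ^ (r / 4)`, which lies below the stated
bound because `e² ≤ 128`.
-/

open Finset

/-- A finite family `ℋ` of functions `A → B` is `r`-wise independent if, for `H`
drawn uniformly from `ℋ`, for every subset `T ⊆ A` with `|T| ≤ r`, the values
`(H x)_{x ∈ T}` are mutually independent and uniform on `B`, i.e. every assignment
on `T` occurs with probability `(1/|B|)^{|T|}`. -/
def RWiseIndependentFamily {A B : Type*} [DecidableEq A] [DecidableEq B] [Fintype B]
    (r : ℕ) (ℋ : Finset (A → B)) : Prop :=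
  ∀ T : Finset A, T.card ≤ r → ∀ v : A → B,
    ((ℋ.filter (fun H => ∀ x ∈ T, H x = v x)).card : ℝ) / ℋ.card =
      ((1 : ℝ) / Fintype.card B) ^ T.card

/-- The random variable `R = Σ_{s,t} (-1)^{⟨u₀,F(s)⟩ + ⟨u₁,G(t)⟩} p(s,t)`. -/
noncomputable def biasR (ℓ ℓ' : ℕ)
    (p : (Fin ℓ → ZMod 2) → (Fin ℓ → ZMod 2) → ℝ)
    (u₀ u₁ : Fin ℓ' → ZMod 2)
    (F G : (Fin ℓ → ZMod 2) → (Fin ℓ' → ZMod 2)) : ℝ :=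
  ∑ s, ∑ t,
    (-1 : ℝ) ^ (((∑ i, u₀ i * F s i) + (∑ i, u₁ i * G t i) : ZMod 2)).val * p s t

theorem Finset.sum_sum_comm_sum_sum {M α β γ δ : Type*} [AddCommMonoid M] (s : Finset α)
    (t : Finset β) (u : Finset γ) (v : Finset δ) (f : α → β → γ → δ → M) :
    ∑ a ∈ s, ∑ b ∈ t, ∑ c ∈ u, ∑ d ∈ v, f a b c d =
      ∑ c ∈ u, ∑ d ∈ v, ∑ a ∈ s, ∑ b ∈ t, f a b c d := by
  simp only [← sum_product' (s := u) (t := v), ← sum_product' (s := s) (t := t)]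
  exact sum_comm

theorem Finset.card_filter_le_abs_mul_pow_le_sum_pow {α : Type*} (s : Finset α) (f : α → ℝ)
    {n : ℕ} (hn : Even n) {c : ℝ} (hc : 0 ≤ c) :
    #{x ∈ s | c ≤ |f x|} * c ^ n ≤ ∑ x ∈ s, f x ^ n := by
  calc #{x ∈ s | c ≤ |f x|} * c ^ n = #{x ∈ s | c ≤ |f x|} • c ^ n := (nsmul_eq_mul _ _).symm
    _ ≤ ∑ x ∈ s with c ≤ |f x|, f x ^ n := card_nsmul_le_sum _ _ _ fun x hx => by
        rw [← hn.pow_abs (f x)]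
        exact pow_le_pow_left₀ hc (mem_filter.mp hx).2 n
    _ ≤ ∑ x ∈ s, f x ^ n :=
        sum_le_sum_of_subset_of_nonneg (filter_subset _ _) fun x _ _ => hn.pow_nonneg _

namespace RWiseIndependentFamily

variable {A B : Type*} [DecidableEq A] [DecidableEq B] [Fintype B] {r : ℕ} {ℋ : Finset (A → B)}

theorem card_filter_eq (hℋ : RWiseIndependentFamily r ℋ) {T : Finset A} (hT : #T ≤ r)
    (v : A → B) :
    (#{H ∈ ℋ | ∀ x ∈ T, H x = v x} : ℝ) = #ℋ * (1 / Fintype.card B) ^ #T := by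
  rcases ℋ.eq_empty_or_nonempty with rfl | hne
  · simp
  · rw [← hℋ T hT v, mul_div_cancel₀ _ (by exact_mod_cast hne.card_pos.ne')]

theorem sum_prod_eq [Nonempty B] (hℋ : RWiseIndependentFamily r ℋ) {T : Finset A} (hT : #T ≤ r)
    (φ : A → B → ℝ) :
    ∑ H ∈ ℋ, ∏ a ∈ T, φ a (H a) = #ℋ * ∏ a ∈ T, (∑ b, φ a b) / Fintype.card B := by
  have hfiber (j : T → B) :
      #{H ∈ ℋ | (fun a : T => H a) = j} = (#ℋ : ℝ) * (1 / Fintype.card B) ^ #T := by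
    let v : A → B := fun a => if h : a ∈ T then j ⟨a, h⟩ else Classical.arbitrary B
    rw [← hℋ.card_filter_eq hT v]
    congr 3
    ext H
    simp only [funext_iff, Subtype.forall]
    exact forall₂_congr fun a ha => by simp [v, ha]
  calc ∑ H ∈ ℋ, ∏ a ∈ T, φ a (H a)
      = ∑ H ∈ ℋ, ∑ j : T → B, if (fun a : T => H a) = j then ∏ a : T, φ a (j a) else 0 := by
        refine sum_congr rfl fun H _ => ?_
        rw [Fintype.sum_ite_eq, ← prod_coe_sort]
    _ = ∑ j : T → B, #{H ∈ ℋ | (fun a : T => H a) = j} * ∏ a : T, φ a (j a) := by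
        rw [sum_comm]
        simp [sum_ite, sum_const]
    _ = #ℋ * ∏ a ∈ T, (∑ b, φ a b) / Fintype.card B := by
        simp_rw [hfiber, ← mul_sum, ← Fintype.prod_sum]
        rw [prod_coe_sort T fun a => ∑ b, φ a b, prod_div_distrib, prod_const]
        ring

theorem sum_prod_addChar [Fintype A] [AddCommGroup B] (hℋ : RWiseIndependentFamily r ℋ)
    {ι : Type*} [Fintype ι] (hι : Fintype.card ι ≤ r) (ψ : AddChar B ℝ) (s : ι → A) :
    ∑ H ∈ ℋ, ∏ i, ψ (H (s i)) = if ∀ a, #{i | s i = a} • ψ = 0 then (#ℋ : ℝ) else 0 := by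
  have hT : #(univ.image s) ≤ r := card_image_le.trans (by simpa using hι)
  have hcharSum (k : ℕ) : (∑ b, (k • ψ) b) / Fintype.card B = if k • ψ = 0 then 1 else 0 := by
    rw [AddChar.sum_eq_ite]
    split_ifs <;> simp
  calc ∑ H ∈ ℋ, ∏ i, ψ (H (s i))
      = ∑ H ∈ ℋ, ∏ a ∈ univ.image s, (#{i | s i = a} • ψ) (H a) := by
        refine sum_congr rfl fun H _ => ?_
        rw [prod_comp (fun a => ψ (H a)) s]
        rfl
    _ = #ℋ * ∏ a ∈ univ.image s, if #{i | s i = a} • ψ = 0 then 1 else 0 := by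
        simp_rw [hℋ.sum_prod_eq hT, hcharSum]
    _ = _ := by
        have hout (a : A) (ha : a ∉ univ.image s) : #{i | s i = a} = 0 := by
          simp only [card_eq_zero, filter_eq_empty_iff]
          exact fun i _ h => ha (h ▸ mem_image_of_mem s (mem_univ i))
        have hiff : (∀ a ∈ univ.image s, #{i | s i = a} • ψ = 0) ↔ ∀ a, #{i | s i = a} • ψ = 0 :=
          ⟨fun h a => if ha : a ∈ univ.image s then h a ha else by rw [hout a ha, zero_nsmul],
            fun h a _ => h a⟩
        simp only [prod_boole, mul_ite, mul_one, mul_zero, hiff]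

end RWiseIndependentFamily

theorem AddChar.nsmul_eq_zero_iff_even {B : Type*} [AddCommGroup B] {ψ : AddChar B ℝ}
    (hψ : addOrderOf ψ = 2) (k : ℕ) : k • ψ = 0 ↔ Even k := by
  rw [← addOrderOf_dvd_iff_nsmul_eq_zero, hψ, even_iff_two_dvd]

noncomputable def dotSignChar {n : Type*} [Fintype n] (u : n → ZMod 2) : AddChar (n → ZMod 2) ℝ :=
  (AddChar.zmodChar 2 (by norm_num : (-1 : ℝ) ^ 2 = 1)).compAddMonoidHom
    (AddMonoidHom.mk' (u ⬝ᵥ ·) (dotProduct_add u))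

theorem dotSignChar_apply {n : Type*} [Fintype n] (u y : n → ZMod 2) :
    dotSignChar u y = (-1) ^ (u ⬝ᵥ y).val := rfl

theorem addOrderOf_dotSignChar {n : Type*} [Fintype n] [DecidableEq n] {u : n → ZMod 2}
    (hu : u ≠ 0) :
    addOrderOf (dotSignChar u) = 2 := by
  apply addOrderOf_eq_prime
  · ext y
    simp [dotSignChar_apply, ← pow_mul, pow_mul']
  · obtain ⟨j, hj⟩ := Function.ne_iff.mp hu
    have huj : u j = 1 := Fin.eq_one_of_ne_zero _ hj
    rw [AddChar.ne_zero_iff]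
    refine ⟨Pi.single j 1, ?_⟩
    simp only [dotSignChar_apply, dotProduct_single, huj, mul_one, ZMod.val_one]
    norm_num

namespace Equiv.Perm

variable {ι : Type*}

def IsFixedPointFreeInvolution (σ : Perm ι) : Prop :=
  Function.Involutive σ ∧ ∀ i, σ i ≠ i

instance [Fintype ι] [DecidableEq ι] : DecidablePred (@IsFixedPointFreeInvolution ι) :=
  fun σ => inferInstanceAs (Decidable ((∀ i, σ (σ i) = i) ∧ ∀ i, σ i ≠ i))

theorem exists_isFixedPointFreeInvolution [Fintype ι] (h : Even (Fintype.card ι)) :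
    ∃ σ : Perm ι, IsFixedPointFreeInvolution σ := by
  obtain ⟨k, hk⟩ := h
  let e : ι ≃ Fin k × Bool := Fintype.equivOfCardEq (by simp [hk, mul_two])
  refine ⟨(e.trans ((Equiv.refl _).prodCongr Equiv.boolNot)).trans e.symm, fun i => ?_,
    fun i h => ?_⟩
  · simp [Prod.map]
  · have := congrArg (fun j => (e j).2) h
    simp at this

theorem exists_isFixedPointFreeInvolution_comp_eq [Fintype ι] {A : Type*} [DecidableEq A]
    (s : ι → A) (h : ∀ a, Even #{i | s i = a}) :
    ∃ σ : Perm ι, IsFixedPointFreeInvolution σ ∧ ∀ i, s (σ i) = s i := by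
  choose τ hτ using fun a => exists_isFixedPointFreeInvolution (ι := {i // s i = a})
    (by rw [Fintype.card_subtype]; exact h a)
  let f : ι → ι := fun i => τ (s i) ⟨i, rfl⟩
  have hf (a : A) (x : {i // s i = a}) : f x = τ a x := by
    obtain ⟨i, rfl⟩ := x
    rfl
  have hinv : Function.Involutive f := fun i => by
    rw [hf (s i) (τ (s i) ⟨i, rfl⟩), (hτ _).1]
  refine ⟨hinv.toPerm f, ⟨hinv, fun i hi => (hτ (s i)).2 ⟨i, rfl⟩ (Subtype.ext hi)⟩,
    fun i => (τ (s i) ⟨i, rfl⟩).2⟩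

namespace IsFixedPointFreeInvolution

variable {σ : Perm ι}

theorem cycleType_eq [Fintype ι] [DecidableEq ι] (hσ : IsFixedPointFreeInvolution σ) :
    σ.cycleType = Multiset.replicate (Fintype.card ι / 2) 2 := by
  have hsq : σ ^ 2 = 1 := by ext i; simp [sq, hσ.1 i]
  have htwo : ∀ n ∈ σ.cycleType, n = 2 := fun n hn =>
    le_antisymm
      (Nat.le_of_dvd two_pos ((dvd_of_mem_cycleType hn).trans (orderOf_dvd_of_pow_eq_one hsq)))
      (two_le_of_mem_cycleType hn)
  have hsum : σ.cycleType.sum = Fintype.card ι := by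
    rw [sum_cycleType, ← card_univ]
    congr 1
    exact eq_univ_of_forall fun i => mem_support.mpr (hσ.2 i)
  rw [Multiset.eq_replicate_of_mem htwo] at hsum ⊢
  rw [Multiset.sum_replicate, smul_eq_mul] at hsum
  congr 1
  omega

end IsFixedPointFreeInvolution

theorem card_isFixedPointFreeInvolution_le [Fintype ι] [DecidableEq ι] {q : ℕ}
    (hq : Fintype.card ι = 2 * q) :
    #{σ : Perm ι | IsFixedPointFreeInvolution σ} ≤ q ^ q := by
  have hfact : ∏ n ∈ (Multiset.replicate q 2).toFinset,
      ((Multiset.replicate q 2).count n).factorial = q.factorial := by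
    rcases Nat.eq_zero_or_pos q with rfl | hq0
    · rfl
    · simp [Multiset.toFinset_replicate, hq0.ne']
  have hcount : #{σ : Perm ι | σ.cycleType = Multiset.replicate q 2} * (2 ^ q * q.factorial) =
      (2 * q).factorial := by
    have h := card_of_cycleType_mul_eq ι (Multiset.replicate q 2)
    rw [if_pos ⟨by simp [hq, mul_comm], fun a ha => (Multiset.eq_of_mem_replicate ha).ge⟩,
      hfact] at h
    simpa [hq, mul_comm q 2, mul_assoc] using h
  have hle : #{σ : Perm ι | IsFixedPointFreeInvolution σ} * (2 ^ q * q.factorial) ≤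
      2 ^ q * q.factorial * q ^ q := by
    calc _ ≤ #{σ : Perm ι | σ.cycleType = Multiset.replicate q 2} * (2 ^ q * q.factorial) := by
          refine Nat.mul_le_mul_right _ (card_le_card fun σ hσ => ?_)
          simp only [mem_filter, mem_univ, true_and] at hσ ⊢
          rw [hσ.cycleType_eq, hq, Nat.mul_div_cancel_left q two_pos]
      _ = q.factorial * (2 * q).descFactorial q := by
          rw [hcount, ← Nat.factorial_mul_descFactorial (by omega : q ≤ 2 * q)]
          congr 2
          omega
      _ ≤ q.factorial * (2 * q) ^ q := Nat.mul_le_mul_left _ (Nat.descFactorial_le_pow _ _)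
      _ = 2 ^ q * q.factorial * q ^ q := by ring
  rw [mul_comm] at hle
  exact Nat.le_of_mul_le_mul_left hle (by positivity)

section pairMins

variable [Fintype ι] [LinearOrder ι] {σ : Perm ι}

def pairMins (σ : Perm ι) : Finset ι := {i | i < σ i}

@[simp]
theorem mem_pairMins {i : ι} : i ∈ pairMins σ ↔ i < σ i := by
  simp [pairMins]

namespace IsFixedPointFreeInvolution

theorem min_mem_pairMins (hσ : IsFixedPointFreeInvolution σ) (i : ι) :
    min i (σ i) ∈ pairMins σ := by
  rw [mem_pairMins]
  rcases (hσ.2 i).lt_or_gt with h | h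
  · rw [min_eq_right h.le, hσ.1 i]
    exact h
  · rwa [min_eq_left h.le]

theorem filter_min_eq (hσ : IsFixedPointFreeInvolution σ) {j : ι} (hj : j ∈ pairMins σ) :
    ({i | min i (σ i) = j} : Finset ι) = {j, σ j} := by
  rw [mem_pairMins] at hj
  ext i
  simp only [mem_filter, mem_univ, true_and, mem_insert, mem_singleton]
  constructor
  · rintro rfl
    rcases min_choice i (σ i) with h | h <;> rw [h]
    · exact Or.inl rfl
    · exact Or.inr (hσ.1 i).symm
  · rintro (rfl | rfl)
    · exact min_eq_left hj.le
    · rw [hσ.1 j, min_eq_right hj.le]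

theorem prod_eq_prod_pairMins (hσ : IsFixedPointFreeInvolution σ) {M : Type*} [CommMonoid M]
    (f : ι → M) :
    ∏ i, f i = ∏ j ∈ pairMins σ, f j * f (σ j) := by
  rw [← prod_fiberwise_of_maps_to (t := pairMins σ) (g := fun i => min i (σ i))
    fun i _ => hσ.min_mem_pairMins i]
  refine prod_congr rfl fun j hj => ?_
  simp only [hσ.filter_min_eq hj, prod_pair (hσ.2 j).symm]

theorem two_mul_card_pairMins (hσ : IsFixedPointFreeInvolution σ) :
    2 * #(pairMins σ) = Fintype.card ι := by
  rw [← card_univ, card_eq_sum_card_fiberwise (s := univ) (t := pairMins σ)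
    (f := fun i => min i (σ i)) fun i _ => hσ.min_mem_pairMins i, mul_comm, ← smul_eq_mul,
    ← sum_const]
  refine sum_congr rfl fun j hj => ?_
  simp only [hσ.filter_min_eq hj, card_pair (hσ.2 j).symm]

theorem sum_fixed_prod (hσ : IsFixedPointFreeInvolution σ) {A R : Type*} [Fintype A]
    [DecidableEq A] [CommSemiring R] (h : ι → A → R) :
    ∑ S : ι → A with ∀ i, S (σ i) = S i, ∏ i, h i (S i) =
      ∏ j ∈ pairMins σ, ∑ a, h j a * h (σ j) a := by
  let π : ι → pairMins σ := fun i => ⟨min i (σ i), hσ.min_mem_pairMins i⟩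
  have hπ (j : pairMins σ) : π j = j :=
    Subtype.ext (min_eq_left (mem_pairMins.mp j.2).le)
  rw [← prod_coe_sort, Fintype.prod_sum]
  refine sum_nbij' (fun S j => S j) (fun g i => g (π i)) (fun _ _ => mem_univ _) (fun g _ => ?_)
    (fun S hS => ?_) (fun g _ => ?_) (fun S hS => ?_)
  · simp only [mem_filter, mem_univ, true_and]
    refine fun i => congrArg g (Subtype.ext ?_)
    change min (σ i) (σ (σ i)) = min i (σ i)
    rw [hσ.1 i, min_comm]
  · simp only [mem_filter, mem_univ, true_and] at hS
    funext i
    rcases min_choice i (σ i) with h | h <;> simp only [π, h, hS]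
  · funext j
    simp only [hπ]
  · simp only [mem_filter, mem_univ, true_and] at hS
    rw [hσ.prod_eq_prod_pairMins, ← prod_coe_sort]
    simp only [hS]

end IsFixedPointFreeInvolution

end pairMins

variable {A A' : Type*} [Fintype A] [DecidableEq A] [Fintype A'] [DecidableEq A']

theorem sum_fixed_sum_fixed_prod_le [Fintype ι] [LinearOrder ι] {σ τ : Perm ι}
    (hσ : IsFixedPointFreeInvolution σ) (hτ : IsFixedPointFreeInvolution τ)
    (p : A → A' → ℝ) (hp : ∀ a b, 0 ≤ p a b) :
    ∑ T : ι → A' with ∀ i, T (τ i) = T i, ∑ S : ι → A with ∀ i, S (σ i) = S i,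
      ∏ i, p (S i) (T i) ≤ (∑ a, ∑ b, p a b ^ 2) ^ (Fintype.card ι / 2) := by
  let g (b : A') : ℝ := √(∑ a, p a b ^ 2)
  have hg (b : A') : g b * g b = ∑ a, p a b ^ 2 := Real.mul_self_sqrt (by positivity)
  calc ∑ T : ι → A' with ∀ i, T (τ i) = T i, ∑ S : ι → A with ∀ i, S (σ i) = S i,
        ∏ i, p (S i) (T i)
      = ∑ T : ι → A' with ∀ i, T (τ i) = T i,
          ∏ j ∈ pairMins σ, ∑ a, p a (T j) * p a (T (σ j)) := by
        exact sum_congr rfl fun T _ => hσ.sum_fixed_prod fun i a => p a (T i)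
    _ ≤ ∑ T : ι → A' with ∀ i, T (τ i) = T i, ∏ j ∈ pairMins σ, g (T j) * g (T (σ j)) := by
        gcongr with T _ j _
        · exact fun j _ => sum_nonneg fun a _ => mul_nonneg (hp _ _) (hp _ _)
        · simpa [g, sq] using
            Real.sum_mul_le_sqrt_mul_sqrt univ (fun a => p a (T j)) (fun a => p a (T (σ j)))
    _ = ∏ j ∈ pairMins τ, ∑ b, g b * g b := by
        rw [← hτ.sum_fixed_prod fun _ b => g b]
        exact sum_congr rfl fun T _ => (hσ.prod_eq_prod_pairMins fun i => g (T i)).symm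
    _ = (∑ a, ∑ b, p a b ^ 2) ^ (Fintype.card ι / 2) := by
        rw [prod_const, ← hτ.two_mul_card_pairMins, Nat.mul_div_cancel_left _ two_pos, sum_comm]
        simp only [hg]

theorem sum_evenFibers_le_sum_sum_fixed [Fintype ι] [DecidableEq ι] (φ : (ι → A) → ℝ)
    (hφ : ∀ S, 0 ≤ φ S) :
    ∑ S : ι → A with ∀ a, Even #{i | S i = a}, φ S ≤
      ∑ σ : Perm ι with IsFixedPointFreeInvolution σ, ∑ S : ι → A with ∀ i, S (σ i) = S i, φ S := by
  calc ∑ S : ι → A with ∀ a, Even #{i | S i = a}, φ S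
      ≤ ∑ S : ι → A with ∀ a, Even #{i | S i = a},
          ∑ σ : Perm ι with IsFixedPointFreeInvolution σ ∧ ∀ i, S (σ i) = S i, φ S := by
        gcongr with S hS
        obtain ⟨σ, hσ, hSσ⟩ := exists_isFixedPointFreeInvolution_comp_eq S (mem_filter.mp hS).2
        exact single_le_sum (f := fun _ => φ S) (a := σ) (fun _ _ => hφ S) (by simp [hσ, hSσ])
    _ ≤ ∑ S : ι → A, ∑ σ : Perm ι with IsFixedPointFreeInvolution σ ∧ ∀ i, S (σ i) = S i, φ S :=
        sum_le_sum_of_subset_of_nonneg (filter_subset _ _) fun S _ _ => sum_nonneg fun _ _ => hφ S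
    _ = _ := sum_comm' fun S σ => by simp [and_comm]

theorem sum_evenFibers_sum_evenFibers_prod_le [Fintype ι] [LinearOrder ι] {q : ℕ}
    (hq : Fintype.card ι = 2 * q) (p : A → A' → ℝ) (hp : ∀ a b, 0 ≤ p a b) :
    ∑ S : ι → A with ∀ a, Even #{i | S i = a}, ∑ T : ι → A' with ∀ b, Even #{i | T i = b},
      ∏ i, p (S i) (T i) ≤ (q ^ q) ^ 2 * (∑ a, ∑ b, p a b ^ 2) ^ q := by
  let I : Finset (Perm ι) := {σ | IsFixedPointFreeInvolution σ}
  have hprod (S : ι → A) (T : ι → A') : 0 ≤ ∏ i, p (S i) (T i) := prod_nonneg fun i _ => hp _ _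
  have hI : #I ≤ q ^ q := card_isFixedPointFreeInvolution_le hq
  calc ∑ S : ι → A with ∀ a, Even #{i | S i = a}, ∑ T : ι → A' with ∀ b, Even #{i | T i = b},
        ∏ i, p (S i) (T i)
      ≤ ∑ S : ι → A with ∀ a, Even #{i | S i = a}, ∑ τ ∈ I,
          ∑ T : ι → A' with ∀ i, T (τ i) = T i, ∏ i, p (S i) (T i) :=
        sum_le_sum fun S _ => sum_evenFibers_le_sum_sum_fixed _ (hprod S)
    _ = ∑ τ ∈ I, ∑ T : ι → A' with ∀ i, T (τ i) = T i,
          ∑ S : ι → A with ∀ a, Even #{i | S i = a}, ∏ i, p (S i) (T i) := by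
        rw [sum_comm]
        exact sum_congr rfl fun τ _ => sum_comm
    _ ≤ ∑ τ ∈ I, ∑ T : ι → A' with ∀ i, T (τ i) = T i, ∑ σ ∈ I,
          ∑ S : ι → A with ∀ i, S (σ i) = S i, ∏ i, p (S i) (T i) := by
        gcongr with τ _ T _
        exact sum_evenFibers_le_sum_sum_fixed _ fun S => hprod S T
    _ = ∑ τ ∈ I, ∑ σ ∈ I, ∑ T : ι → A' with ∀ i, T (τ i) = T i,
          ∑ S : ι → A with ∀ i, S (σ i) = S i, ∏ i, p (S i) (T i) :=
        sum_congr rfl fun τ _ => sum_comm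
    _ ≤ ∑ τ ∈ I, ∑ σ ∈ I, (∑ a, ∑ b, p a b ^ 2) ^ q := by
        gcongr with τ hτ σ hσ
        simp only [I, mem_filter, mem_univ, true_and] at hσ hτ
        simpa [hq] using sum_fixed_sum_fixed_prod_le hσ hτ p hp
    _ ≤ (q ^ q) ^ 2 * (∑ a, ∑ b, p a b ^ 2) ^ q := by
        rw [sum_const, sum_const, smul_smul, nsmul_eq_mul, sq]
        gcongr
        exact_mod_cast Nat.mul_le_mul hI hI

end Equiv.Perm

section CharBias

variable {A A' B B' : Type*} [Fintype A] [Fintype A'] [AddCommGroup B] [AddCommGroup B']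

def charBias (ψ₀ : AddChar B ℝ) (ψ₁ : AddChar B' ℝ) (p : A → A' → ℝ) (F : A → B) (G : A' → B') :
    ℝ :=
  ∑ s, ∑ t, ψ₀ (F s) * ψ₁ (G t) * p s t

theorem charBias_pow (ψ₀ : AddChar B ℝ) (ψ₁ : AddChar B' ℝ) (p : A → A' → ℝ) (F : A → B)
    (G : A' → B') (n : ℕ) :
    charBias ψ₀ ψ₁ p F G ^ n =
      ∑ S : Fin n → A, ∑ T : Fin n → A', ∏ i, ψ₀ (F (S i)) * ψ₁ (G (T i)) * p (S i) (T i) := by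
  rw [charBias, ← Fin.prod_const, Fintype.prod_sum]
  exact sum_congr rfl fun S _ => Fintype.prod_sum _

theorem sum_sum_charBias_pow_le [DecidableEq A] [DecidableEq A'] [Fintype B] [DecidableEq B]
    [Fintype B'] [DecidableEq B'] {r q : ℕ} {ℱ : Finset (A → B)} {𝒢 : Finset (A' → B')}
    (hℱ : RWiseIndependentFamily r ℱ) (h𝒢 : RWiseIndependentFamily r 𝒢)
    {ψ₀ : AddChar B ℝ} {ψ₁ : AddChar B' ℝ} (hψ₀ : addOrderOf ψ₀ = 2) (hψ₁ : addOrderOf ψ₁ = 2)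
    {p : A → A' → ℝ} (hp : ∀ s t, 0 ≤ p s t) (hqr : 2 * q ≤ r) :
    ∑ F ∈ ℱ, ∑ G ∈ 𝒢, charBias ψ₀ ψ₁ p F G ^ (2 * q) ≤
      #ℱ * #𝒢 * ((q ^ q) ^ 2 * (∑ a, ∑ b, p a b ^ 2) ^ q) := by
  have hcard : Fintype.card (Fin (2 * q)) ≤ r := by simpa using hqr
  calc ∑ F ∈ ℱ, ∑ G ∈ 𝒢, charBias ψ₀ ψ₁ p F G ^ (2 * q)
      = ∑ S : Fin (2 * q) → A, ∑ T : Fin (2 * q) → A',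
          (∑ F ∈ ℱ, ∏ i, ψ₀ (F (S i))) * (∑ G ∈ 𝒢, ∏ i, ψ₁ (G (T i))) * ∏ i, p (S i) (T i) := by
        simp_rw [charBias_pow, prod_mul_distrib, sum_mul, mul_sum]
        rw [sum_sum_comm_sum_sum]
        simp only [sum_mul]
    _ = #ℱ * #𝒢 * ∑ S : Fin (2 * q) → A with ∀ a, Even #{i | S i = a},
          ∑ T : Fin (2 * q) → A' with ∀ b, Even #{i | T i = b}, ∏ i, p (S i) (T i) := by
        simp only [hℱ.sum_prod_addChar hcard, h𝒢.sum_prod_addChar hcard,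
          AddChar.nsmul_eq_zero_iff_even hψ₀, AddChar.nsmul_eq_zero_iff_even hψ₁]
        simp only [sum_filter, mul_sum]
        refine sum_congr rfl fun S _ => ?_
        split_ifs with hS
        · rw [mul_sum]
          refine sum_congr rfl fun T _ => ?_
          split_ifs <;> ring
        · simp
    _ ≤ #ℱ * #𝒢 * ((q ^ q) ^ 2 * (∑ a, ∑ b, p a b ^ 2) ^ q) := by
        gcongr
        exact Equiv.Perm.sum_evenFibers_sum_evenFibers_prod_le (Fintype.card_fin _) p hp

end CharBias

theorem sum_sum_sq_le {A A' : Type*} [Fintype A] [Fintype A'] {p : A → A' → ℝ} {η : ℝ}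
    (hη : 0 ≤ η) (hp0 : ∀ s t, 0 ≤ p s t) (hpη : ∀ s t, p s t ≤ η) (hpsum : ∑ s, ∑ t, p s t ≤ 1) :
    ∑ s, ∑ t, p s t ^ 2 ≤ η := by
  calc ∑ s, ∑ t, p s t ^ 2 ≤ ∑ s, ∑ t, η * p s t := by
        gcongr with s _ t _
        rw [sq]
        exact mul_le_mul_of_nonneg_right (hpη s t) (hp0 s t)
    _ = η * ∑ s, ∑ t, p s t := by simp only [mul_sum]
    _ ≤ η := mul_le_of_le_one_right hη hpsum

theorem biasR_eq_charBias (ℓ ℓ' : ℕ) (p : (Fin ℓ → ZMod 2) → (Fin ℓ → ZMod 2) → ℝ)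
    (u₀ u₁ : Fin ℓ' → ZMod 2) (F G : (Fin ℓ → ZMod 2) → (Fin ℓ' → ZMod 2)) :
    biasR ℓ ℓ' p u₀ u₁ F G = charBias (dotSignChar u₀) (dotSignChar u₁) p F G := by
  refine sum_congr rfl fun s _ => sum_congr rfl fun t _ => ?_
  rw [dotSignChar_apply, dotSignChar_apply, ← pow_add,
    neg_one_pow_eq_pow_mod_two ((u₀ ⬝ᵥ F s).val + (u₁ ⬝ᵥ G t).val), ← ZMod.val_add]
  rfl

theorem sum_biasR_pow_le {ℓ ℓ' r q : ℕ} {ℱ 𝒢 : Finset ((Fin ℓ → ZMod 2) → (Fin ℓ' → ZMod 2))}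
    (hℱ : RWiseIndependentFamily r ℱ) (h𝒢 : RWiseIndependentFamily r 𝒢)
    {u₀ u₁ : Fin ℓ' → ZMod 2} (hu₀ : u₀ ≠ 0) (hu₁ : u₁ ≠ 0)
    {p : (Fin ℓ → ZMod 2) → (Fin ℓ → ZMod 2) → ℝ} {η : ℝ} (hη : 0 ≤ η)
    (hp0 : ∀ s t, 0 ≤ p s t) (hpη : ∀ s t, p s t ≤ η) (hpsum : ∑ s, ∑ t, p s t ≤ 1)
    (hqr : 2 * q ≤ r) :
    ∑ FG ∈ ℱ ×ˢ 𝒢, biasR ℓ ℓ' p u₀ u₁ FG.1 FG.2 ^ (2 * q) ≤ #(ℱ ×ˢ 𝒢) * ((q : ℝ) ^ 2 * η) ^ q := by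
  have hsq := sum_sum_sq_le hη hp0 hpη hpsum
  calc ∑ FG ∈ ℱ ×ˢ 𝒢, biasR ℓ ℓ' p u₀ u₁ FG.1 FG.2 ^ (2 * q)
      = ∑ F ∈ ℱ, ∑ G ∈ 𝒢, charBias (dotSignChar u₀) (dotSignChar u₁) p F G ^ (2 * q) := by
        rw [sum_product]
        simp only [biasR_eq_charBias]
    _ ≤ #ℱ * #𝒢 * ((q ^ q) ^ 2 * (∑ s, ∑ t, p s t ^ 2) ^ q) :=
        sum_sum_charBias_pow_le hℱ h𝒢 (addOrderOf_dotSignChar hu₀) (addOrderOf_dotSignChar hu₁)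
          hp0 hqr
    _ ≤ #(ℱ ×ˢ 𝒢) * ((q : ℝ) ^ 2 * η) ^ q := by
        rw [card_product, Nat.cast_mul, mul_pow, ← pow_mul, ← pow_mul, mul_comm q 2]
        gcongr

theorem pow_le_tail_bound {q : ℕ} (hq : 1 ≤ q) {η lam : ℝ} (hη : 0 ≤ η) (hlam : 0 < lam) :
    ((q : ℝ) ^ 2 * η / lam ^ 2) ^ q ≤
      8 * Real.exp (1 / (3 * (4 * q : ℕ))) * Real.sqrt (Real.pi * (4 * q : ℕ)) *
        (8 * η * ((4 * q : ℕ) : ℝ) ^ 2 / (Real.exp 1 ^ 2 * lam ^ 2)) ^ (4 * q / 4) := by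
  rw [Nat.mul_div_cancel_left q (by norm_num : 0 < 4)]
  have hq' : (1 : ℝ) ≤ q := by exact_mod_cast hq
  have hconst : 1 ≤ 8 * Real.exp (1 / (3 * (4 * q : ℕ))) * Real.sqrt (Real.pi * (4 * q : ℕ)) := by
    have hexp : 1 ≤ Real.exp (1 / (3 * (4 * q : ℕ))) := Real.one_le_exp (by positivity)
    have hsqrt : 1 ≤ Real.sqrt (Real.pi * (4 * q : ℕ)) := by
      rw [Real.one_le_sqrt]
      push_cast
      nlinarith [Real.pi_gt_three]
    nlinarith
  have he : Real.exp 1 ^ 2 ≤ 128 := by nlinarith [Real.exp_one_lt_d9, Real.exp_pos 1]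
  have hbase : (q : ℝ) ^ 2 * η / lam ^ 2 ≤
      8 * η * ((4 * q : ℕ) : ℝ) ^ 2 / (Real.exp 1 ^ 2 * lam ^ 2) := by
    rw [div_le_div_iff₀ (by positivity) (by positivity)]
    push_cast
    have : 0 ≤ (q : ℝ) ^ 2 * η * lam ^ 2 := by positivity
    nlinarith
  calc ((q : ℝ) ^ 2 * η / lam ^ 2) ^ q
      ≤ (8 * η * ((4 * q : ℕ) : ℝ) ^ 2 / (Real.exp 1 ^ 2 * lam ^ 2)) ^ q :=
        pow_le_pow_left₀ (by positivity) hbase q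
    _ ≤ _ := le_mul_of_one_le_left (by positivity) hconst

theorem bias_tail_bound_general
    (ℓ ℓ' : ℕ)
    (r : ℕ) (hr : 4 ≤ r) (hr4 : 4 ∣ r)
    (η : ℝ) (hη0 : 0 < η)
    (p : (Fin ℓ → ZMod 2) → (Fin ℓ → ZMod 2) → ℝ)
    (hp0 : ∀ s t, 0 ≤ p s t) (hpη : ∀ s t, p s t ≤ η)
    (hpsum : ∑ s, ∑ t, p s t ≤ 1)
    (ℱ 𝒢 : Finset ((Fin ℓ → ZMod 2) → (Fin ℓ' → ZMod 2)))
    (hFind : RWiseIndependentFamily r ℱ) (hGind : RWiseIndependentFamily r 𝒢)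
    (u₀ u₁ : Fin ℓ' → ZMod 2) (hu₀ : u₀ ≠ 0) (hu₁ : u₁ ≠ 0) :
    ∀ lam : ℝ, 0 < lam →
      (((ℱ ×ˢ 𝒢).filter
          (fun FG => lam ≤ |biasR ℓ ℓ' p u₀ u₁ FG.1 FG.2|)).card : ℝ) /
        (ℱ ×ˢ 𝒢).card ≤
      8 * Real.exp (1 / (3 * r)) * Real.sqrt (Real.pi * r) *
        (8 * η * r ^ 2 / (Real.exp 1 ^ 2 * lam ^ 2)) ^ (r / 4) := by
  intro lam hlam
  obtain ⟨q, rfl⟩ := hr4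
  have hmoment :=
    sum_biasR_pow_le hFind hGind hu₀ hu₁ hη0.le hp0 hpη hpsum (by omega : 2 * q ≤ 4 * q)
  have hmarkov := card_filter_le_abs_mul_pow_le_sum_pow (ℱ ×ˢ 𝒢)
    (fun FG => biasR ℓ ℓ' p u₀ u₁ FG.1 FG.2) (even_two_mul q) hlam.le
  refine (div_le_of_le_mul₀ (by positivity) (by positivity) ?_).trans
    (pow_le_tail_bound (by omega) hη0.le hlam)
  rw [div_pow, ← pow_mul, div_mul_eq_mul_div, le_div_iff₀ (by positivity)]
  linarith

/-- Tail bound for the bias `R = Σ_{s,t} (-1)^{⟨u₀,F(s)⟩+⟨u₁,G(t)⟩} p(s,t)` where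
`F, G` are drawn independently and uniformly from `r`-wise independent families,
`u₀, u₁` are nonzero, `0 ≤ p(s,t) ≤ η`, `Σ p(s,t) ≤ 1`, `4 ∣ r`, `r ≥ 4`:
for every `λ > 0`,
`P(|R| ≥ λ) ≤ 8 e^{1/(3r)} √(πr) (8 η r² / (e² λ²))^{r/4}`. -/
theorem bias_tail_bound
    (ℓ ℓ' : ℕ) (hℓ : 1 ≤ ℓ) (hℓ' : 1 ≤ ℓ')
    (r : ℕ) (hr : 4 ≤ r) (hr4 : 4 ∣ r)
    (η : ℝ) (hη0 : 0 < η) (hη1 : η ≤ 1)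
    (p : (Fin ℓ → ZMod 2) → (Fin ℓ → ZMod 2) → ℝ)
    (hp0 : ∀ s t, 0 ≤ p s t) (hpη : ∀ s t, p s t ≤ η)
    (hpsum : ∑ s, ∑ t, p s t ≤ 1)
    (ℱ 𝒢 : Finset ((Fin ℓ → ZMod 2) → (Fin ℓ' → ZMod 2)))
    (hFne : ℱ.Nonempty) (hGne : 𝒢.Nonempty)
    (hFind : RWiseIndependentFamily r ℱ) (hGind : RWiseIndependentFamily r 𝒢)
    (u₀ u₁ : Fin ℓ' → ZMod 2) (hu₀ : u₀ ≠ 0) (hu₁ : u₁ ≠ 0) :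
    ∀ lam : ℝ, 0 < lam →
      (((ℱ ×ˢ 𝒢).filter
          (fun FG => lam ≤ |biasR ℓ ℓ' p u₀ u₁ FG.1 FG.2|)).card : ℝ) /
        (ℱ ×ˢ 𝒢).card ≤
      8 * Real.exp (1 / (3 * r)) * Real.sqrt (Real.pi * r) *
        (8 * η * r ^ 2 / (Real.exp 1 ^ 2 * lam ^ 2)) ^ (r / 4) :=
  bias_tail_bound_general ℓ ℓ' r hr hr4 η hη0 p hp0 hpη hpsum ℱ 𝒢 hFind hGind u₀ u₁ hu₀ hu₁
end

section
/- Let m ≥ 1, d = 2^m, and let ρ ∈ ℂ^(d×d) be a density matrix. Suppose M, M̃ ∈ ℂ^(d×d) satisfy 0 ⪯ M ⪯ I and 0 ⪯ M̃ ⪯ I. Suppose M is 2δ-non-negligible with respect to ρ, where 0 < δ ≤ 1/2, and Tr(M) ≥ 1. Suppose ‖M − M̃‖ ≤ μ, where μ ≤ (2/3)·δ·2^(−m). Then M̃ is δ-non-negligible with respect to ρ, i.e. Tr(M̃ρ) ≥ δ·Tr(M̃)/d. -/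
/-!
Put `A = M - M̃`. The diagonal entries of `A`, and the summands `vᵢᴴ A vᵢ` of `Tr(Aρ)` for a
rank-one decomposition `ρ = ∑ vᵢ vᵢᴴ`, are values of the quadratic form of `A`, so each is
bounded by `‖A‖` times the squared length of its vector. Hence `Tr(M̃ρ) ≥ Tr(Mρ) - μ ≥ 2δ Tr(M)/d - μ` and `Tr(M̃) ≤ Tr(M) + μd`, and the gap
closes because `μd(1 + δ) ≤ (2/3)·δ·(3/2) = δ ≤ δ Tr(M)`.
-/

open ComplexOrder

namespace Matrix

open WithLp

variable {𝕜 n : Type*} [RCLike 𝕜] [Fintype n] [DecidableEq n]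

lemma norm_star_dotProduct_mulVec_le (A : Matrix n n 𝕜) (v : n → 𝕜) :
    ‖star v ⬝ᵥ (A *ᵥ v)‖ ≤ ‖toEuclideanCLM (𝕜 := 𝕜) A‖ * RCLike.re (star v ⬝ᵥ v) := by
  set T := toEuclideanCLM (𝕜 := 𝕜) A
  have hquad : star v ⬝ᵥ (A *ᵥ v) = inner 𝕜 (toLp 2 v) (T (toLp 2 v)) := by
    rw [toEuclideanCLM_toLp, EuclideanSpace.inner_toLp_toLp, dotProduct_comm]
  have hnorm : RCLike.re (star v ⬝ᵥ v) = ‖toLp 2 v‖ ^ 2 := by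
    rw [dotProduct_comm, ← EuclideanSpace.inner_toLp_toLp, inner_self_eq_norm_sq_to_K]
    norm_cast
  rw [hquad, hnorm]
  calc _ ≤ ‖toLp 2 v‖ * ‖T (toLp 2 v)‖ := norm_inner_le_norm _ _
    _ ≤ ‖toLp 2 v‖ * (‖T‖ * ‖toLp 2 v‖) := by gcongr; exact T.le_opNorm _
    _ = ‖T‖ * ‖toLp 2 v‖ ^ 2 := by ring

lemma norm_trace_le_mul_card (A : Matrix n n 𝕜) :
    ‖A.trace‖ ≤ ‖toEuclideanCLM (𝕜 := 𝕜) A‖ * Fintype.card n := by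
  have hdiag (i : n) : A i i = star (Pi.single i 1) ⬝ᵥ (A *ᵥ Pi.single i 1) := by
    simp [mulVec_single, single_dotProduct]
  calc ‖A.trace‖ ≤ ∑ i, ‖A i i‖ := norm_sum_le _ _
    _ ≤ ∑ _i : n, ‖toEuclideanCLM (𝕜 := 𝕜) A‖ := by
        gcongr with i
        have h := norm_star_dotProduct_mulVec_le A (Pi.single i 1)
        rwa [← hdiag, ← Pi.single_star, star_one, single_dotProduct, one_mul, Pi.single_eq_same,
          RCLike.one_re, mul_one] at h
    _ = _ := by simp [mul_comm]

lemma PosSemidef.norm_trace_mul_le {ρ : Matrix n n 𝕜} (hρ : ρ.PosSemidef) (A : Matrix n n 𝕜) :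
    ‖(A * ρ).trace‖ ≤ ‖toEuclideanCLM (𝕜 := 𝕜) A‖ * RCLike.re ρ.trace := by
  obtain ⟨k, v, rfl⟩ := posSemidef_iff_eq_sum_vecMulVec.mp hρ
  have hterm (w : n → 𝕜) (B : Matrix n n 𝕜) :
      (B * vecMulVec w (star w)).trace = star w ⬝ᵥ (B *ᵥ w) := by
    rw [mul_vecMulVec, trace_vecMulVec, dotProduct_comm]
  simp only [Finset.mul_sum, trace_sum, map_sum]
  calc _ ≤ ∑ i, ‖(A * vecMulVec (v i) (star (v i))).trace‖ := norm_sum_le _ _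
    _ ≤ _ := by
        gcongr with i
        simpa [hterm, dotProduct_comm (v i)] using norm_star_dotProduct_mulVec_le A (v i)

end Matrix

theorem nonnegligible_of_close_general
    (m d : ℕ) (hd : d = 2 ^ m)
    (ρ : Matrix (Fin d) (Fin d) ℂ) (hρ : ρ.PosSemidef) (hρtr : ρ.trace = 1)
    (M Mt : Matrix (Fin d) (Fin d) ℂ)
    (δ : ℝ) (hδ : δ ≤ 1 / 2)
    (hMnn : 2 * δ * M.trace.re / d ≤ (M * ρ).trace.re)
    (hMtr : 1 ≤ M.trace.re)
    (μ : ℝ) (hμ : μ ≤ (2 / 3) * δ * (2 : ℝ) ^ (-(m : ℝ)))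
    (hclose : ‖Matrix.toEuclideanCLM (𝕜 := ℂ) (M - Mt)‖ ≤ μ) :
    δ * Mt.trace.re / d ≤ (Mt * ρ).trace.re := by
  have hdr : (d : ℝ) = 2 ^ m := mod_cast hd
  have hd0 : (0 : ℝ) < d := hdr ▸ by positivity
  have hμ0 : 0 ≤ μ := (norm_nonneg _).trans hclose
  have hμd : μ * d ≤ 2 / 3 * δ := by
    rwa [Real.rpow_neg zero_le_two, Real.rpow_natCast, ← hdr, ← div_eq_mul_inv,
      le_div_iff₀ hd0] at hμ
  have hδ0 : 0 ≤ δ := by nlinarith [mul_nonneg hμ0 hd0.le]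
  have hρdiff : (M * ρ).trace.re - (Mt * ρ).trace.re ≤ μ := by
    have h := hρ.norm_trace_mul_le (M - Mt)
    rw [hρtr, RCLike.one_re, mul_one] at h
    simpa [sub_mul] using (Complex.re_le_norm _).trans (h.trans hclose)
  have htrdiff : Mt.trace.re - M.trace.re ≤ μ * d := by
    have h := Matrix.norm_trace_le_mul_card (M - Mt)
    rw [Fintype.card_fin] at h
    have := neg_le_of_abs_le <|
      (Complex.abs_re_le_norm _).trans (h.trans (mul_le_mul_of_nonneg_right hclose hd0.le))
    rw [Matrix.trace_sub, Complex.sub_re] at this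
    linarith
  rw [div_le_iff₀ hd0] at hMnn ⊢
  nlinarith [mul_le_mul_of_nonneg_right hρdiff hd0.le, mul_le_mul_of_nonneg_left htrdiff hδ0,
    mul_le_mul_of_nonneg_left hMtr hδ0, mul_le_mul_of_nonneg_left hδ hδ0,
    mul_le_mul_of_nonneg_right hμd (by linarith : (0 : ℝ) ≤ 1 + δ)]

/-- If `ρ` is a density matrix on `d = 2^m` dimensions, `0 ⪯ M ⪯ I` is
`2δ`-non-negligible with respect to `ρ` (i.e. `Tr(Mρ) ≥ 2δ·Tr(M)/d`) with
`0 < δ ≤ 1/2` and `Tr(M) ≥ 1`, and `0 ⪯ M̃ ⪯ I` satisfies `‖M - M̃‖ ≤ μ` in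
operator norm with `μ ≤ (2/3)·δ·2^{-m}`, then `M̃` is `δ`-non-negligible:
`Tr(M̃ρ) ≥ δ·Tr(M̃)/d`. -/
theorem nonnegligible_of_close
    (m d : ℕ) (hm : 1 ≤ m) (hd : d = 2 ^ m)
    (ρ : Matrix (Fin d) (Fin d) ℂ) (hρ : ρ.PosSemidef) (hρtr : ρ.trace = 1)
    (M Mt : Matrix (Fin d) (Fin d) ℂ)
    (hM0 : M.PosSemidef) (hM1 : (1 - M).PosSemidef)
    (hMt0 : Mt.PosSemidef) (hMt1 : (1 - Mt).PosSemidef)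
    (δ : ℝ) (hδ0 : 0 < δ) (hδ : δ ≤ 1 / 2)
    (hMnn : 2 * δ * M.trace.re / d ≤ (M * ρ).trace.re)
    (hMtr : 1 ≤ M.trace.re)
    (μ : ℝ) (hμ : μ ≤ (2 / 3) * δ * (2 : ℝ) ^ (-(m : ℝ)))
    (hclose : ‖Matrix.toEuclideanCLM (𝕜 := ℂ) (M - Mt)‖ ≤ μ) :
    δ * Mt.trace.re / d ≤ (Mt * ρ).trace.re :=
  nonnegligible_of_close_general m d hd ρ hρ hρtr M Mt δ hδ hMnn hMtr μ hμ hclose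
end

section
/- Let d ≥ 2 and 0 < δ ≤ 1/2. Let M, M̃ ∈ ℂ^(d×d) satisfy 0 ⪯ M ⪯ I, 0 ⪯ M̃ ⪯ I, ‖M‖ = 1, and ‖M − M̃‖ ≤ μ where 0 ≤ μ ≤ 1/2. Let ν ∈ ℂ^(d×d) be Hermitian with trace norm ‖ν‖_Tr ≤ 1, and let ξ ∈ ℂ^(d×d) be Hermitian with ‖ξ‖_Tr ≤ 1. Assume Tr(Mξ) ≥ 2δ/d and Tr(M̃ξ) ≥ δ/(2d). Then |Tr(Mν)/Tr(Mξ) − Tr(M̃ν)/Tr(M̃ξ)| ≤ 2μ·(d/δ)². -/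
open ComplexOrder

/-- The trace norm `‖A‖_Tr = Tr √(A A†)` of a complex matrix. -/
noncomputable def traceNorm {d : ℕ} (A : Matrix (Fin d) (Fin d) ℂ) : ℝ :=
  (((Matrix.posSemidef_self_mul_conjTranspose A).1.eigenvectorUnitary : Matrix (Fin d) (Fin d) ℂ) *
    Matrix.diagonal (((↑) : ℝ → ℂ) ∘ (√·) ∘ (Matrix.posSemidef_self_mul_conjTranspose A).1.eigenvalues) *
    (star (Matrix.posSemidef_self_mul_conjTranspose A).1.eigenvectorUnitary : Matrix (Fin d) (Fin d) ℂ)).trace.re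

open Matrix in
lemma traceNorm_of_hermitian {d : ℕ} {ν : Matrix (Fin d) (Fin d) ℂ} (hν : ν.IsHermitian) :
    traceNorm ν = ∑ i, |hν.eigenvalues i| := by
  classical
  have hP := (Matrix.posSemidef_self_mul_conjTranspose ν).1
  have e0 : traceNorm ν = (hP.cfc Real.sqrt).trace.re := rfl
  have e1 : hP.cfc Real.sqrt = hν.cfc (fun x => |x|) := by
    rw [← hP.cfc_eq, ← hν.cfc_eq, hν.eq, ← pow_two, ← cfc_comp_pow (hf := Real.continuous_sqrt.continuousOn) (ha := hν.isSelfAdjoint)]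
    congr 1
    funext x
    exact Real.sqrt_sq_eq_abs x
  rw [e0, e1, Matrix.IsHermitian.cfc, Unitary.conjStarAlgAut_apply, trace_mul_cycle,
    Unitary.coe_star_mul_self, Matrix.one_mul, trace_diagonal]
  simp

open Matrix in
lemma abs_trace_mul_re_le {d : ℕ} (A : Matrix (Fin d) (Fin d) ℂ) {ν : Matrix (Fin d) (Fin d) ℂ}
    (hν : ν.IsHermitian) :
    |(A * ν).trace.re| ≤ ‖Matrix.toEuclideanCLM (𝕜 := ℂ) A‖ * traceNorm ν := by
  classical
  set U : Matrix (Fin d) (Fin d) ℂ := (hν.eigenvectorUnitary : Matrix (Fin d) (Fin d) ℂ) with hU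
  have htr : (A * ν).trace = ∑ i, (Uᴴ * A * U) i i * (hν.eigenvalues i : ℂ) := by
    conv_lhs => rw [hν.spectral_theorem]
    rw [Unitary.conjStarAlgAut_apply, star_eq_conjTranspose, ← Matrix.mul_assoc, ← Matrix.mul_assoc,
      trace_mul_comm, ← Matrix.mul_assoc, ← Matrix.mul_assoc]
    rw [Matrix.trace]
    simp [Matrix.mul_diagonal, Matrix.diag]
    rfl
  have hentry : ∀ i, ‖(Uᴴ * A * U) i i‖ ≤ ‖Matrix.toEuclideanCLM (𝕜 := ℂ) A‖ := by
    intro i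
    set T := Matrix.toEuclideanCLM (𝕜 := ℂ) A with hT
    set u : EuclideanSpace ℂ (Fin d) := hν.eigenvectorBasis i with hu
    have hnu : ‖u‖ = 1 := hν.eigenvectorBasis.orthonormal.1 i
    have hTu : ∀ j, (T u) j = ∑ k, A j k * u k := fun j => rfl
    have hval : (Uᴴ * A * U) i i = inner ℂ u (T u) := by
      simp only [PiLp.inner_apply, RCLike.inner_apply, hTu, Matrix.mul_apply,
        conjTranspose_apply, hU, Matrix.IsHermitian.eigenvectorUnitary_apply, Finset.sum_mul,
        Finset.mul_sum]
      rw [Finset.sum_comm]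
      refine Finset.sum_congr rfl fun j _ => Finset.sum_congr rfl fun k _ => ?_
      simp [hu]
      ring
    rw [hval]
    calc ‖(inner ℂ u (T u) : ℂ)‖ ≤ ‖u‖ * ‖T u‖ := norm_inner_le_norm _ _
      _ ≤ ‖u‖ * (‖T‖ * ‖u‖) := by
          exact mul_le_mul_of_nonneg_left (T.le_opNorm u) (norm_nonneg u)
      _ = ‖T‖ := by rw [hnu]; ring
  rw [traceNorm_of_hermitian hν]
  have hre : (A * ν).trace.re = ∑ i, ((Uᴴ * A * U) i i).re * hν.eigenvalues i := by
    rw [htr, Complex.re_sum]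
    refine Finset.sum_congr rfl fun i _ => ?_
    simp [Complex.mul_re]
  rw [hre]
  calc |∑ i, ((Uᴴ * A * U) i i).re * hν.eigenvalues i|
      ≤ ∑ i, |((Uᴴ * A * U) i i).re * hν.eigenvalues i| := Finset.abs_sum_le_sum_abs _ _
    _ ≤ ∑ i, ‖Matrix.toEuclideanCLM (𝕜 := ℂ) A‖ * |hν.eigenvalues i| := by
        refine Finset.sum_le_sum fun i _ => ?_
        rw [abs_mul]
        refine mul_le_mul_of_nonneg_right ?_ (abs_nonneg _)
        exact (Complex.abs_re_le_norm _).trans (hentry i)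
    _ = ‖Matrix.toEuclideanCLM (𝕜 := ℂ) A‖ * ∑ i, |hν.eigenvalues i| := by
        rw [Finset.mul_sum]

lemma ratio_arith (D δ μ a a' b b' : ℝ) (hD : 2 ≤ D) (hδ0 : 0 < δ) (hδ : δ ≤ 1/2)
    (hμ0 : 0 ≤ μ) (hb : 2*δ/D ≤ b) (hb' : δ/(2*D) ≤ b')
    (hab : |a - a'| ≤ μ) (hbb : |b - b'| ≤ μ) (ha' : |a'| ≤ 3/2) :
    |a/b - a'/b'| ≤ 2*μ*(D/δ)^2 := by
  have hDpos : (0:ℝ) < D := by linarith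
  have hbpos : 0 < b := lt_of_lt_of_le (by positivity) hb
  have hb'pos : 0 < b' := lt_of_lt_of_le (by positivity) hb'
  have key : a/b - a'/b' = (a - a')/b + a' * (b' - b)/(b*b') := by
    field_simp
    ring
  rw [key]
  have h1 : |(a-a')/b| ≤ μ * D/(2*δ) := by
    rw [abs_div, abs_of_pos hbpos]
    calc |a-a'|/b ≤ μ/(2*δ/D) := by gcongr
      _ = μ * D/(2*δ) := by field_simp
  have h2 : |a' * (b'-b)/(b*b')| ≤ (3/2)*μ*(D^2/δ^2) := by
    rw [abs_div, abs_mul, abs_of_pos (mul_pos hbpos hb'pos)]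
    have hbb' : |b' - b| ≤ μ := by rw [abs_sub_comm]; exact hbb
    calc |a'| * |b'-b| / (b*b') ≤ (3/2) * μ / ((2*δ/D)*(δ/(2*D))) := by
          gcongr
      _ = (3/2)*μ*(D^2/δ^2) := by field_simp
  calc |(a - a')/b + a' * (b' - b)/(b*b')|
      ≤ |(a-a')/b| + |a' * (b'-b)/(b*b')| := abs_add_le _ _
    _ ≤ μ * D/(2*δ) + (3/2)*μ*(D^2/δ^2) := add_le_add h1 h2
    _ ≤ 2*μ*(D/δ)^2 := by
        have hδD : δ ≤ D := by linarith
        have key2 : 2*μ*(D/δ)^2 - (μ * D/(2*δ) + 3/2*μ*(D^2/δ^2))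
            = μ*D*(D - δ)/(2*δ^2) := by field_simp; ring
        have hpos : 0 ≤ μ*D*(D - δ)/(2*δ^2) :=
          div_nonneg (mul_nonneg (mul_nonneg hμ0 hDpos.le) (by linarith)) (by positivity)
        linarith

/-- Matrix core of the continuity lemma: if `0 ⪯ M, M̃ ⪯ I`, `‖M‖ = 1`,
`‖M - M̃‖ ≤ μ ≤ 1/2`, `ν, ξ` are Hermitian with trace norm at most 1, and
`Tr(Mξ) ≥ 2δ/d`, `Tr(M̃ξ) ≥ δ/(2d)` with `0 < δ ≤ 1/2`, then
`|Tr(Mν)/Tr(Mξ) - Tr(M̃ν)/Tr(M̃ξ)| ≤ 2μ (d/δ)²`. -/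
theorem continuity_of_bias_ratio
    (d : ℕ) (hd : 2 ≤ d) (δ μ : ℝ) (hδ0 : 0 < δ) (hδ : δ ≤ 1 / 2)
    (hμ0 : 0 ≤ μ) (hμ : μ ≤ 1 / 2)
    (M Mt ν ξ : Matrix (Fin d) (Fin d) ℂ)
    (hM0 : M.PosSemidef) (hM1 : (1 - M).PosSemidef)
    (hMt0 : Mt.PosSemidef) (hMt1 : (1 - Mt).PosSemidef)
    (hMnorm : ‖Matrix.toEuclideanCLM (𝕜 := ℂ) M‖ = 1)
    (hclose : ‖Matrix.toEuclideanCLM (𝕜 := ℂ) (M - Mt)‖ ≤ μ)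
    (hν : ν.IsHermitian) (hνtr : traceNorm ν ≤ 1)
    (hξ : ξ.IsHermitian) (hξtr : traceNorm ξ ≤ 1)
    (hMξ : 2 * δ / d ≤ (M * ξ).trace.re)
    (hMtξ : δ / (2 * d) ≤ (Mt * ξ).trace.re) :
    |(M * ν).trace.re / (M * ξ).trace.re -
      (Mt * ν).trace.re / (Mt * ξ).trace.re| ≤ 2 * μ * (d / δ) ^ 2 := by
  have hD : (2:ℝ) ≤ (d:ℝ) := by exact_mod_cast hd
  have hνnn : 0 ≤ traceNorm ν := by
    rw [traceNorm_of_hermitian hν]; positivity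
  have hξnn : 0 ≤ traceNorm ξ := by
    rw [traceNorm_of_hermitian hξ]; positivity
  -- norm of Mt
  have hMtnorm : ‖Matrix.toEuclideanCLM (𝕜 := ℂ) Mt‖ ≤ 3/2 := by
    have : Matrix.toEuclideanCLM (𝕜 := ℂ) Mt
        = Matrix.toEuclideanCLM (𝕜 := ℂ) M - Matrix.toEuclideanCLM (𝕜 := ℂ) (M - Mt) := by
      rw [map_sub]; abel
    rw [this]
    calc ‖Matrix.toEuclideanCLM (𝕜 := ℂ) M - Matrix.toEuclideanCLM (𝕜 := ℂ) (M - Mt)‖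
        ≤ ‖Matrix.toEuclideanCLM (𝕜 := ℂ) M‖ + ‖Matrix.toEuclideanCLM (𝕜 := ℂ) (M - Mt)‖ :=
          norm_sub_le _ _
      _ ≤ 1 + μ := by rw [hMnorm]; exact add_le_add_right hclose _
      _ ≤ 3/2 := by linarith
  have ha' : |(Mt * ν).trace.re| ≤ 3/2 := by
    calc |(Mt * ν).trace.re| ≤ ‖Matrix.toEuclideanCLM (𝕜 := ℂ) Mt‖ * traceNorm ν :=
          abs_trace_mul_re_le Mt hν
      _ ≤ (3/2) * 1 := mul_le_mul hMtnorm hνtr hνnn (by norm_num)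
      _ = 3/2 := by norm_num
  have hab : |(M * ν).trace.re - (Mt * ν).trace.re| ≤ μ := by
    have e : (M * ν).trace.re - (Mt * ν).trace.re = ((M - Mt) * ν).trace.re := by
      rw [Matrix.sub_mul, Matrix.trace_sub, Complex.sub_re]
    rw [e]
    calc |((M - Mt) * ν).trace.re| ≤ ‖Matrix.toEuclideanCLM (𝕜 := ℂ) (M - Mt)‖ * traceNorm ν :=
          abs_trace_mul_re_le _ hν
      _ ≤ μ * 1 := mul_le_mul hclose hνtr hνnn hμ0
      _ = μ := mul_one μ
  have hbb : |(M * ξ).trace.re - (Mt * ξ).trace.re| ≤ μ := by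
    have e : (M * ξ).trace.re - (Mt * ξ).trace.re = ((M - Mt) * ξ).trace.re := by
      rw [Matrix.sub_mul, Matrix.trace_sub, Complex.sub_re]
    rw [e]
    calc |((M - Mt) * ξ).trace.re| ≤ ‖Matrix.toEuclideanCLM (𝕜 := ℂ) (M - Mt)‖ * traceNorm ξ :=
          abs_trace_mul_re_le _ hξ
      _ ≤ μ * 1 := mul_le_mul hclose hξtr hξnn hμ0
      _ = μ := mul_one μ
  exact ratio_arith (d:ℝ) δ μ _ _ _ _ hD hδ0 hδ hμ0 hMξ hMtξ hab hbb ha'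
end
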